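/- Fix n ∈ ℕ, b ∈ ℝ with 0 < b < 1, α_1 > 0, α_2 > 0, and γ_1, γ_2 ∈ ℝ with 0 < |γ_1 − γ_2| < 1 and −α_2 < γ_1 − γ_2 < α_1. Define W_1(m) = b^m · Γ(m + α_1) · Γ(m + γ_1 − γ_2 + α_2) / (m! · Γ(m + γ_1 − γ_2 + 1)) and W_2(m) = b^m · Γ(m + γ_2 − γ_1 + α_1) · Γ(m + α_2) / (m! · Γ(m + γ_2 − γ_1 + 1)) for m ∈ ℕ, and define P : ℝ → ℝ by P(x) = Σ_{j=0}^{n} (−1)^j C(n,j) b^(−j) · Π_{i=0}^{j−1} [(x − γ_1 − i)(x − γ_2 − i)] · Π_{i=0}^{n−j−1} [(x − γ_1 + α_1 + i)(x − γ_2 + α_2 + i)]. Then: (i) W_j(m) > 0 for all m ∈ ℕ and j ∈ {1,2}; (ii) P is the evaluation of a real polynomial of degree exactly 2n; (iii) for every j ∈ {1,2} and every natural number k < n, the series Σ_{m=0}^{∞} P(γ_j + m) · (γ_j + m)^k · W_j(m) converges and has sum 0. -/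

import Mathlib

/-!
On the lattice `γ₁ + ℕ` the factors `x - γ₁ - i` cut the sum defining `P` off at `j ≤ m`, and the
functional equation of `Γ` turns each remaining term into a weight with `α₁, α₂` raised by `n`.
This is the Rodrigues formula `P W = ∇ⁿ W^{(α+n)}` (with `W^{(α+n)}` extended by zero to negative
arguments). Summing by parts moves `∇ⁿ` onto `(γ₁ + m)ᵏ` as an `n`-th forward difference, which
vanishes for `k < n`; all series converge by the ratio test because `b < 1`. The second lattice
follows by exchanging the indices `1 ↔ 2`, which leaves `P` unchanged. Every summand of `P` is
monic of degree `2n` up to its coefficient, and these coefficients add up to `(1 - b⁻¹)ⁿ ≠ 0`.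
-/

open Finset Filter Polynomial Topology

lemma Real.Gamma_add_natCast_eq_mul_prod {x : ℝ} (hx : 0 < x) (r : ℕ) :
    Real.Gamma (x + r) = Real.Gamma x * ∏ i ∈ range r, (x + i) := by
  induction r with
  | zero => simp
  | succ r ih =>
    rw [Nat.cast_succ, ← add_assoc, Real.Gamma_add_one (by positivity), ih, prod_range_succ]
    ring

lemma Real.Gamma_add_one_eq_mul_prod_sub {x : ℝ} {j : ℕ} (hx : (j : ℝ) < x + 1) :
    Real.Gamma (x + 1) = Real.Gamma (x + 1 - j) * ∏ i ∈ range j, (x - i) := by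
  induction j with
  | zero => simp
  | succ j ih =>
    push_cast at hx
    rw [ih (by linarith), prod_range_succ, show x + 1 - j = (x - j) + 1 by ring,
      Real.Gamma_add_one (by linarith), Nat.cast_succ, show x + 1 - (j + 1) = x - j by ring]
    ring

theorem sum_range_neg_one_pow_mul_choose_mul_add_pow_eq_zero {R : Type*} [CommRing R]
    {k n : ℕ} (hk : k < n) (x : R) :
    ∑ j ∈ range (n + 1), (-1) ^ j * (n.choose j : R) * (x + j) ^ k = 0 := by
  have h := congrFun (fwdDiff_iter_pow_eq_zero_of_lt (R := R) hk) x
  rw [fwdDiff_iter_eq_sum_shift, Pi.zero_apply] at h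
  calc _ = (-1) ^ n * ∑ j ∈ range (n + 1),
        ((-1 : ℤ) ^ (n - j) * (n.choose j : ℤ)) • (x + j • (1 : R)) ^ k := by
        rw [mul_sum]
        refine sum_congr rfl fun j hj => ?_
        obtain ⟨i, rfl⟩ := Nat.exists_eq_add_of_le (mem_range_succ_iff.1 hj)
        rw [zsmul_eq_mul, nsmul_one, Nat.add_sub_cancel_left, pow_add]
        push_cast
        rw [show ((-1 : R) ^ j * (-1) ^ i * ((-1) ^ i * (j + i).choose j * (x + j) ^ k)) =
          (-1) ^ j * (j + i).choose j * (x + j) ^ k * ((-1) ^ i * (-1) ^ i) by ring,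
          ← mul_pow, neg_one_mul, neg_neg, one_pow, mul_one]
    _ = 0 := by rw [h, mul_zero]

lemma monic_prod_X_sub_C_mul_X_sub_C {R : Type*} [CommRing R] [Nontrivial R]
    (a c : ℕ → R) (r : ℕ) :
    (∏ i ∈ range r, (X - C (a i)) * (X - C (c i))).Monic ∧
      (∏ i ∈ range r, (X - C (a i)) * (X - C (c i))).natDegree = 2 * r := by
  have hmonic : ∀ i ∈ range r, ((X - C (a i)) * (X - C (c i))).Monic :=
    fun i _ => (monic_X_sub_C _).mul (monic_X_sub_C _)
  refine ⟨monic_prod_of_monic _ _ hmonic, ?_⟩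
  rw [natDegree_prod_of_monic _ _ hmonic]
  simp [(monic_X_sub_C _).natDegree_mul (monic_X_sub_C _), mul_comm]

lemma degree_sum_C_mul_monic {R ι : Type*} [Semiring R] (s : Finset ι) (c : ι → R)
    (M : ι → R[X]) {d : ℕ} (hM : ∀ i ∈ s, (M i).Monic ∧ (M i).natDegree = d)
    (hc : ∑ i ∈ s, c i ≠ 0) :
    (∑ i ∈ s, C (c i) * M i).degree = d := by
  refine degree_eq_of_le_of_coeff_ne_zero ?_ ?_
  · refine degree_le_of_natDegree_le (natDegree_sum_le_of_forall_le _ _ fun i hi => ?_)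
    exact (natDegree_C_mul_le _ _).trans (hM i hi).2.le
  · rwa [finsetSum_coeff, sum_congr rfl fun i hi => by
      rw [coeff_C_mul, ← (hM i hi).2, (hM i hi).1.coeff_natDegree, mul_one]]

/-- Summation by parts: against `f`, the zero-extended backward shifts of `G` become forward
shifts of `f`. -/
theorem hasSum_sum_mul_shift_eq_zero {R : Type*} [CommRing R] [TopologicalSpace R]
    [IsTopologicalRing R] [T2Space R] (s : Finset ℕ) (κ G f : ℕ → R)
    (hG : ∀ j ∈ s, Summable fun m => G m * f (m + j))
    (hf : ∀ m, ∑ j ∈ s, κ j * f (m + j) = 0) :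
    HasSum (fun m => ∑ j ∈ s, κ j * (if j ≤ m then G (m - j) else 0) * f m) 0 := by
  have hterm : ∀ j ∈ s, HasSum (fun m => κ j * (if j ≤ m then G (m - j) else 0) * f m)
      (κ j * ∑' m, G m * f (m + j)) := fun j hj => by
    rw [← hasSum_nat_add_iff' j, sum_eq_zero fun i hi => by
      rw [if_neg (by simpa using mem_range.1 hi), mul_zero, zero_mul], sub_zero]
    simpa [mul_assoc] using (hG j hj).hasSum.mul_left (κ j)
  convert hasSum_sum hterm
  calc (0 : R) = ∑' m, ∑ j ∈ s, κ j * (G m * f (m + j)) := by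
        simp_rw [mul_left_comm (κ _), ← mul_sum, hf, mul_zero, tsum_zero]
    _ = ∑ j ∈ s, ∑' m, κ j * (G m * f (m + j)) :=
        Summable.tsum_finsetSum fun j hj => (hG j hj).mul_left _
    _ = _ := sum_congr rfl fun j hj => (hG j hj).tsum_mul_left _

namespace MeixnerSorokin

noncomputable def poly (n : ℕ) (b α₁ α₂ γ₁ γ₂ x : ℝ) : ℝ :=
  ∑ j ∈ range (n + 1), (-1 : ℝ) ^ j * (n.choose j : ℝ) * b ^ (-(j : ℤ)) *
    (∏ i ∈ range j, ((x - γ₁ - (i : ℝ)) * (x - γ₂ - (i : ℝ)))) *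
    ∏ i ∈ range (n - j), ((x - γ₁ + α₁ + (i : ℝ)) * (x - γ₂ + α₂ + (i : ℝ)))

/-- `weight b α₁ α₂ γ₁ γ₂` is `W₁`; `W₂` is `weight b α₂ α₁ γ₂ γ₁`. -/
noncomputable def weight (b α₁ α₂ γ₁ γ₂ : ℝ) (m : ℕ) : ℝ :=
  b ^ m * Real.Gamma ((m : ℝ) + α₁) * Real.Gamma ((m : ℝ) + γ₁ - γ₂ + α₂) /
    ((m.factorial : ℝ) * Real.Gamma ((m : ℝ) + γ₁ - γ₂ + 1))

variable {b α₁ α₂ γ₁ γ₂ : ℝ}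

lemma poly_comm (n : ℕ) : poly n b α₁ α₂ γ₁ γ₂ = poly n b α₂ α₁ γ₂ γ₁ := by
  funext x
  refine sum_congr rfl fun j _ => ?_
  rw [prod_congr rfl fun (i : ℕ) _ => mul_comm (x - γ₁ - i) _,
    prod_congr rfl fun (i : ℕ) _ => mul_comm (x - γ₁ + α₁ + i) _]

lemma exists_polynomial_degree_eq_two_mul (hb : b ≠ 1) (n : ℕ) :
    ∃ p : ℝ[X], p.degree = (2 * n : ℕ) ∧ ∀ x, poly n b α₁ α₂ γ₁ γ₂ x = p.eval x := by
  set M : ℕ → ℝ[X] := fun j =>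
    (∏ i ∈ range j, (X - C (γ₁ + i)) * (X - C (γ₂ + i))) *
      ∏ i ∈ range (n - j), (X - C (γ₁ - α₁ - i)) * (X - C (γ₂ - α₂ - i))
  refine ⟨∑ j ∈ range (n + 1), C ((-1) ^ j * (n.choose j : ℝ) * b ^ (-(j : ℤ))) * M j,
    degree_sum_C_mul_monic _ _ _ (fun j hj => ?_) ?_, fun x => ?_⟩
  · obtain ⟨h₁, d₁⟩ := monic_prod_X_sub_C_mul_X_sub_C (fun i => γ₁ + i) (fun i => γ₂ + i) j
    obtain ⟨h₂, d₂⟩ :=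
      monic_prod_X_sub_C_mul_X_sub_C (fun i => γ₁ - α₁ - i) (fun i => γ₂ - α₂ - i) (n - j)
    refine ⟨h₁.mul h₂, ?_⟩
    rw [h₁.natDegree_mul h₂, d₁, d₂]
    have := mem_range_succ_iff.1 hj
    omega
  · rw [show ∑ j ∈ range (n + 1), (-1) ^ j * (n.choose j : ℝ) * b ^ (-(j : ℤ)) = (1 - b⁻¹) ^ n by
      rw [sub_eq_neg_add, add_pow]
      refine sum_congr rfl fun j _ => ?_
      rw [zpow_neg, zpow_natCast, ← inv_pow, neg_pow]
      ring]
    exact pow_ne_zero _ (sub_ne_zero.2 (inv_ne_one.2 hb).symm)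
  · simp only [M, poly, eval_finsetSum, eval_mul, eval_C, eval_prod, eval_sub, eval_X]
    refine sum_congr rfl fun j _ => ?_
    simp only [mul_assoc]
    congr 4 <;> exact prod_congr rfl fun i _ => by ring

lemma weight_pos (hb : 0 < b) (hα₁ : 0 < α₁) (hα₂ : -α₂ < γ₁ - γ₂) (hγ : -1 < γ₁ - γ₂)
    (m : ℕ) : 0 < weight b α₁ α₂ γ₁ γ₂ m := by
  have hm : (0 : ℝ) ≤ m := m.cast_nonneg
  have h₁ := Real.Gamma_pos_of_pos (show 0 < (m : ℝ) + α₁ by linarith)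
  have h₂ := Real.Gamma_pos_of_pos (show 0 < (m : ℝ) + γ₁ - γ₂ + α₂ by linarith)
  have h₃ := Real.Gamma_pos_of_pos (show 0 < (m : ℝ) + γ₁ - γ₂ + 1 by linarith)
  unfold weight
  positivity

lemma weight_succ (hα₁ : 0 < α₁) (hα₂ : -α₂ < γ₁ - γ₂) (hγ : -1 < γ₁ - γ₂) (m : ℕ) :
    weight b α₁ α₂ γ₁ γ₂ (m + 1) = weight b α₁ α₂ γ₁ γ₂ m *
      (b * ((m + α₁) * (m + γ₁ - γ₂ + α₂)) / ((m + 1) * (m + γ₁ - γ₂ + 1))) := by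
  have hm : (0 : ℝ) ≤ m := m.cast_nonneg
  have h₃ := Real.Gamma_pos_of_pos (show 0 < (m : ℝ) + γ₁ - γ₂ + 1 by linarith)
  unfold weight
  rw [Nat.factorial_succ, Nat.cast_mul, Nat.cast_succ, add_right_comm _ 1 α₁,
    Real.Gamma_add_one (by linarith), add_right_comm _ 1 γ₁, add_sub_right_comm _ 1 γ₂,
    add_right_comm _ 1 α₂, Real.Gamma_add_one (by linarith), add_right_comm _ 1 (1 : ℝ),
    Real.Gamma_add_one (by linarith)]
  field_simp
  ring

lemma summable_add_pow_mul_weight (hb0 : 0 < b) (hb1 : b < 1) (hα₁ : 0 < α₁)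
    (hα₂ : -α₂ < γ₁ - γ₂) (hγ : -1 < γ₁ - γ₂) {c : ℝ} (hc : 0 < c) (k : ℕ) :
    Summable fun m : ℕ => ((m : ℝ) + c) ^ k * weight b α₁ α₂ γ₁ γ₂ m := by
  have hpos : ∀ m : ℕ, 0 < ((m : ℝ) + c) ^ k * weight b α₁ α₂ γ₁ γ₂ m := fun m =>
    mul_pos (by positivity) (weight_pos hb0 hα₁ hα₂ hγ m)
  have hratio : ∀ a d : ℝ, Tendsto (fun m : ℕ => (a + m) / (d + m)) atTop (𝓝 1) := fun a d => by
    simpa using tendsto_add_mul_div_add_mul_atTop_nhds a d (1 : ℝ) one_ne_zero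
  have hlim := ((hratio (c + 1) c).pow k).mul
    (((tendsto_const_nhds (x := b)).mul (hratio α₁ 1)).mul (hratio (γ₁ - γ₂ + α₂) (γ₁ - γ₂ + 1)))
  rw [one_pow, one_mul, mul_one, mul_one] at hlim
  refine summable_of_ratio_test_tendsto_lt_one hb1 (.of_forall fun m => (hpos m).ne') ?_
  refine hlim.congr fun m => ?_
  have hm : (0 : ℝ) ≤ m := m.cast_nonneg
  rw [Real.norm_of_nonneg (hpos _).le, Real.norm_of_nonneg (hpos _).le,
    weight_succ hα₁ hα₂ hγ, Nat.cast_succ]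
  have := weight_pos hb0 hα₁ hα₂ hγ m
  have : (m : ℝ) + γ₁ - γ₂ + 1 ≠ 0 := by linarith
  have : γ₁ - γ₂ + 1 + (m : ℝ) ≠ 0 := by linarith
  have : c + (m : ℝ) ≠ 0 := by linarith
  rw [div_pow, show (m : ℝ) + 1 + c = c + 1 + m by ring, add_comm (m : ℝ) c]
  field_simp
  ring

lemma prod_mul_weight_eq_weight_add (hb : b ≠ 0) (hα₁ : 0 < α₁) (hα₂ : -α₂ < γ₁ - γ₂)
    (hγ : -1 < γ₁ - γ₂) {n j : ℕ} (hj : j ≤ n) (l : ℕ) :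
    b ^ (-(j : ℤ)) *
      (∏ i ∈ range j, ((γ₁ + ↑(l + j) - γ₁ - i) * (γ₁ + ↑(l + j) - γ₂ - i))) *
      (∏ i ∈ range (n - j), ((γ₁ + ↑(l + j) - γ₁ + α₁ + i) * (γ₁ + ↑(l + j) - γ₂ + α₂ + i))) *
      weight b α₁ α₂ γ₁ γ₂ (l + j) = weight b (α₁ + n) (α₂ + n) γ₁ γ₂ l := by
  set m : ℝ := ((l + j : ℕ) : ℝ) with hm
  have hml : m = l + j := by rw [hm]; push_cast; ring
  have hl : (0 : ℝ) ≤ l := l.cast_nonneg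
  have hfac : ((l + j).factorial : ℝ) = l.factorial * ∏ i ∈ range j, (m - i) := by
    rw [← Real.Gamma_nat_eq_factorial, ← Real.Gamma_nat_eq_factorial, ← hm,
      Real.Gamma_add_one_eq_mul_prod_sub (x := m) (j := j) (by linarith)]
    congr 2
    rw [hml]; ring
  have hΓ₀ : Real.Gamma (m + γ₁ - γ₂ + 1) =
      Real.Gamma (l + γ₁ - γ₂ + 1) * ∏ i ∈ range j, (m + γ₁ - γ₂ - i) := by
    rw [Real.Gamma_add_one_eq_mul_prod_sub (x := m + γ₁ - γ₂) (j := j) (by linarith)]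
    congr 2
    rw [hml]; ring
  have hΓ₁ : Real.Gamma (l + (α₁ + n)) =
      Real.Gamma (m + α₁) * ∏ i ∈ range (n - j), (m + α₁ + i) := by
    rw [← Real.Gamma_add_natCast_eq_mul_prod (by linarith), Nat.cast_sub hj, hml]
    congr 1; ring
  have hΓ₂ : Real.Gamma (l + γ₁ - γ₂ + (α₂ + n)) =
      Real.Gamma (m + γ₁ - γ₂ + α₂) * ∏ i ∈ range (n - j), (m + γ₁ - γ₂ + α₂ + i) := by
    rw [← Real.Gamma_add_natCast_eq_mul_prod (by linarith), Nat.cast_sub hj, hml]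
    congr 1; ring
  have hprod₁ : ∏ i ∈ range j, ((γ₁ + m - γ₁ - i) * (γ₁ + m - γ₂ - i)) =
      (∏ i ∈ range j, (m - i)) * ∏ i ∈ range j, (m + γ₁ - γ₂ - i) := by
    rw [← prod_mul_distrib]; exact prod_congr rfl fun i _ => by ring
  have hprod₂ : ∏ i ∈ range (n - j), ((γ₁ + m - γ₁ + α₁ + i) * (γ₁ + m - γ₂ + α₂ + i)) =
      (∏ i ∈ range (n - j), (m + α₁ + i)) * ∏ i ∈ range (n - j), (m + γ₁ - γ₂ + α₂ + i) := by
    rw [← prod_mul_distrib]; exact prod_congr rfl fun i _ => by ring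
  have hpos₁ : 0 < ∏ i ∈ range j, (m - i) := prod_pos fun i hi => by
    have : (i : ℝ) < j := by exact_mod_cast mem_range.1 hi
    linarith
  have hpos₂ : 0 < ∏ i ∈ range j, (m + γ₁ - γ₂ - i) := prod_pos fun i hi => by
    have : (i : ℝ) + 1 ≤ j := by exact_mod_cast Nat.succ_le_of_lt (mem_range.1 hi)
    linarith
  have hΓpos := Real.Gamma_pos_of_pos (show 0 < (l : ℝ) + γ₁ - γ₂ + 1 by linarith)
  unfold weight
  rw [← hm, hprod₁, hprod₂, hfac, hΓ₀, hΓ₁, hΓ₂, pow_add, zpow_neg, zpow_natCast]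
  field_simp

/-- The Rodrigues formula `P R^{(α₁, α₂)} = ∇ⁿ R^{(α₁ + n, α₂ + n)}` on the lattice `γ₁ + ℕ`. -/
theorem poly_mul_weight_eq_sum_shift (hb : b ≠ 0) (hα₁ : 0 < α₁) (hα₂ : -α₂ < γ₁ - γ₂)
    (hγ : -1 < γ₁ - γ₂) (n m : ℕ) :
    poly n b α₁ α₂ γ₁ γ₂ (γ₁ + m) * weight b α₁ α₂ γ₁ γ₂ m =
      ∑ j ∈ range (n + 1), (-1) ^ j * (n.choose j : ℝ) *
        (if j ≤ m then weight b (α₁ + n) (α₂ + n) γ₁ γ₂ (m - j) else 0) := by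
  rw [poly, sum_mul]
  refine sum_congr rfl fun j hj => ?_
  split_ifs with hjm
  · obtain ⟨l, rfl⟩ := Nat.exists_eq_add_of_le' hjm
    rw [Nat.add_sub_cancel,
      ← prod_mul_weight_eq_weight_add hb hα₁ hα₂ hγ (mem_range_succ_iff.1 hj) l]
    ring
  · rw [prod_eq_zero (i := m) (mem_range.2 (by omega)) (by ring)]
    ring

theorem hasSum_poly_mul_pow_mul_weight (hb0 : 0 < b) (hb1 : b < 1) (hα₁ : 0 < α₁)
    (hα₂ : -α₂ < γ₁ - γ₂) (hγ : -1 < γ₁ - γ₂) {k n : ℕ} (hk : k < n) :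
    HasSum (fun m : ℕ =>
      poly n b α₁ α₂ γ₁ γ₂ (γ₁ + m) * (γ₁ + m) ^ k * weight b α₁ α₂ γ₁ γ₂ m) 0 := by
  have hsummable : ∀ j : ℕ,
      Summable fun m => weight b (α₁ + n) (α₂ + n) γ₁ γ₂ m * (γ₁ + ↑(m + j)) ^ k := fun j => by
    have hα₁' : 0 < α₁ + n := by positivity
    have hα₂' : -(α₂ + n) < γ₁ - γ₂ := by linarith [(n.cast_nonneg : (0 : ℝ) ≤ n)]
    refine (summable_add_pow_mul_weight hb0 hb1 hα₁' hα₂' hγ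
      (c := |γ₁| + j + 1) (by positivity) k).of_norm_bounded fun m => ?_
    have hw := weight_pos hb0 hα₁' hα₂' hγ m
    rw [norm_mul, norm_pow, Real.norm_of_nonneg hw.le, mul_comm]
    refine mul_le_mul_of_nonneg_right (pow_le_pow_left₀ (norm_nonneg _) ?_ k) hw.le
    rw [Real.norm_eq_abs]
    push_cast
    linarith [abs_add_le γ₁ (m + j), abs_of_nonneg (by positivity : (0 : ℝ) ≤ m + j)]
  refine (hasSum_sum_mul_shift_eq_zero (range (n + 1)) (fun j => (-1) ^ j * (n.choose j : ℝ))
    _ (fun m => (γ₁ + m) ^ k) (fun j _ => hsummable j) fun m => ?_).congr_fun fun m => ?_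
  · push_cast
    simp_rw [← add_assoc]
    exact sum_range_neg_one_pow_mul_choose_mul_add_pow_eq_zero hk _
  · rw [mul_right_comm, poly_mul_weight_eq_sum_shift hb0.ne' hα₁ hα₂ hγ, sum_mul]

end MeixnerSorokin

open MeixnerSorokin in
theorem stmt_10_general (n : ℕ) (b α₁ α₂ : ℝ) (hb0 : 0 < b) (hb1 : b < 1)
    (hα₁ : 0 < α₁) (hα₂ : 0 < α₂) (γ₁ γ₂ : ℝ)
    (hγ1 : |γ₁ - γ₂| < 1)
    (hγα₂ : -α₂ < γ₁ - γ₂) (hγα₁ : γ₁ - γ₂ < α₁) (W₁ W₂ : ℕ → ℝ)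
    (hW₁ : ∀ m : ℕ, W₁ m = b ^ m * Real.Gamma ((m : ℝ) + α₁) *
      Real.Gamma ((m : ℝ) + γ₁ - γ₂ + α₂) /
        ((m.factorial : ℝ) * Real.Gamma ((m : ℝ) + γ₁ - γ₂ + 1)))
    (hW₂ : ∀ m : ℕ, W₂ m = b ^ m * Real.Gamma ((m : ℝ) + γ₂ - γ₁ + α₁) *
      Real.Gamma ((m : ℝ) + α₂) /
        ((m.factorial : ℝ) * Real.Gamma ((m : ℝ) + γ₂ - γ₁ + 1)))
    (P : ℝ → ℝ)
    (hP : ∀ x : ℝ, P x = ∑ j ∈ Finset.range (n + 1),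
      (-1 : ℝ) ^ j * (n.choose j : ℝ) * b ^ (-(j : ℤ)) *
        (∏ i ∈ Finset.range j, ((x - γ₁ - (i : ℝ)) * (x - γ₂ - (i : ℝ)))) *
        ∏ i ∈ Finset.range (n - j), ((x - γ₁ + α₁ + (i : ℝ)) * (x - γ₂ + α₂ + (i : ℝ)))) :
    (∀ m : ℕ, 0 < W₁ m ∧ 0 < W₂ m) ∧
    (∃ p : Polynomial ℝ, p.degree = (2 * n : ℕ) ∧ ∀ x : ℝ, P x = p.eval x) ∧
    (∀ k : ℕ, k < n →
      HasSum (fun m : ℕ => P (γ₁ + m) * (γ₁ + m) ^ k * W₁ m) 0 ∧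
      HasSum (fun m : ℕ => P (γ₂ + m) * (γ₂ + m) ^ k * W₂ m) 0) := by
  obtain ⟨hγ₂₁, hγ₁₂⟩ := abs_lt.1 hγ1
  have hγα₁' : -α₁ < γ₂ - γ₁ := by linarith
  obtain rfl : P = poly n b α₁ α₂ γ₁ γ₂ := funext hP
  obtain rfl : W₁ = weight b α₁ α₂ γ₁ γ₂ := funext hW₁
  obtain rfl : W₂ = weight b α₂ α₁ γ₂ γ₁ := funext fun m => by rw [hW₂, weight]; ring
  refine ⟨fun m => ⟨weight_pos hb0 hα₁ hγα₂ (by linarith) m,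
    weight_pos hb0 hα₂ hγα₁' (by linarith) m⟩, exists_polynomial_degree_eq_two_mul hb1.ne n,
    fun k hk => ⟨hasSum_poly_mul_pow_mul_weight hb0 hb1 hα₁ hγα₂ (by linarith) hk, ?_⟩⟩
  rw [poly_comm]
  exact hasSum_poly_mul_pow_mul_weight hb0 hb1 hα₂ hγα₁' (by linarith) hk

/-- The paper's Meixner–Sorokin family: the weights `W_j` on the interlacing shifted
lattices `γ_j + ℤ₊` are positive, the Rodrigues polynomial `P` has degree exactly `2n`,
and `P` is orthogonal to `x^k`, `k < n`, with respect to both discrete measures. -/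
theorem stmt_10 (n : ℕ) (b α₁ α₂ : ℝ) (hb0 : 0 < b) (hb1 : b < 1)
    (hα₁ : 0 < α₁) (hα₂ : 0 < α₂) (γ₁ γ₂ : ℝ)
    (hγ0 : 0 < |γ₁ - γ₂|) (hγ1 : |γ₁ - γ₂| < 1)
    (hγα₂ : -α₂ < γ₁ - γ₂) (hγα₁ : γ₁ - γ₂ < α₁) (W₁ W₂ : ℕ → ℝ)
    (hW₁ : ∀ m : ℕ, W₁ m = b ^ m * Real.Gamma ((m : ℝ) + α₁) *
      Real.Gamma ((m : ℝ) + γ₁ - γ₂ + α₂) /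
        ((m.factorial : ℝ) * Real.Gamma ((m : ℝ) + γ₁ - γ₂ + 1)))
    (hW₂ : ∀ m : ℕ, W₂ m = b ^ m * Real.Gamma ((m : ℝ) + γ₂ - γ₁ + α₁) *
      Real.Gamma ((m : ℝ) + α₂) /
        ((m.factorial : ℝ) * Real.Gamma ((m : ℝ) + γ₂ - γ₁ + 1)))
    (P : ℝ → ℝ)
    (hP : ∀ x : ℝ, P x = ∑ j ∈ Finset.range (n + 1),
      (-1 : ℝ) ^ j * (n.choose j : ℝ) * b ^ (-(j : ℤ)) *
        (∏ i ∈ Finset.range j, ((x - γ₁ - (i : ℝ)) * (x - γ₂ - (i : ℝ)))) *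
        ∏ i ∈ Finset.range (n - j), ((x - γ₁ + α₁ + (i : ℝ)) * (x - γ₂ + α₂ + (i : ℝ)))) :
    (∀ m : ℕ, 0 < W₁ m ∧ 0 < W₂ m) ∧
    (∃ p : Polynomial ℝ, p.degree = (2 * n : ℕ) ∧ ∀ x : ℝ, P x = p.eval x) ∧
    (∀ k : ℕ, k < n →
      HasSum (fun m : ℕ => P (γ₁ + m) * (γ₁ + m) ^ k * W₁ m) 0 ∧
      HasSum (fun m : ℕ => P (γ₂ + m) * (γ₂ + m) ^ k * W₂ m) 0) :=
  stmt_10_general n b α₁ α₂ hb0 hb1 hα₁ hα₂ γ₁ γ₂ hγ1 hγα₂ hγα₁ W₁ W₂ hW₁ hW₂ P hP
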